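/- For every dimension d, every r with 1 ≤ r ≤ d, every N ≥ 1, and every choice of data points x_1, …, x_N ∈ ℝ^d, the empirical Gaussian complexity of the orthonormal-column linear class H satisfies Ĝ_X(H) ≤ (r/√N) · √( (1/N) Σ_{i=1}^N ‖x_i‖² ) , i.e., Ĝ_X(H) ≤ (r/√N) · √( tr( (1/N)·X Xᵀ ) ). -/

import Mathlib

set_option linter.unusedSectionVars false
open MeasureTheory ProbabilityTheory Real
open scoped ENNReal NNReal
open MeasureTheory ProbabilityTheory Real
open scoped ENNReal NNReal

lemma gauss_wd : gaussianReal 0 1 =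
    volume.withDensity (fun x => ((gaussianPDFReal 0 1 x).toNNReal : ℝ≥0∞)) := by
  rw [gaussianReal_of_var_ne_zero 0 one_ne_zero]
  rfl

lemma gauss_pdf_meas : Measurable (fun x => (gaussianPDFReal 0 1 x).toNNReal) :=
  (measurable_gaussianPDFReal 0 1).real_toNNReal

lemma gauss_integral_eq (g : ℝ → ℝ) :
    ∫ x, g x ∂(gaussianReal 0 1) = ∫ x, gaussianPDFReal 0 1 x * g x := by
  rw [gauss_wd, integral_withDensity_eq_integral_smul gauss_pdf_meas]
  congr 1; ext x
  rw [NNReal.smul_def, Real.coe_toNNReal _ (gaussianPDFReal_nonneg 0 1 x), smul_eq_mul]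

lemma gauss_integrable_iff (g : ℝ → ℝ) :
    Integrable g (gaussianReal 0 1) ↔ Integrable (fun x => gaussianPDFReal 0 1 x * g x) volume := by
  rw [gauss_wd, integrable_withDensity_iff_integrable_smul gauss_pdf_meas]
  have : ∀ x : ℝ, (gaussianPDFReal 0 1 x).toNNReal • g x = gaussianPDFReal 0 1 x * g x := fun x => by
    rw [NNReal.smul_def, Real.coe_toNNReal _ (gaussianPDFReal_nonneg 0 1 x), smul_eq_mul]
  simp_rw [this]

lemma gauss_pdf_eq (x : ℝ) :
    gaussianPDFReal 0 1 x = (Real.sqrt (2 * π))⁻¹ * Real.exp (-(1/2) * x^2) := by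
  simp only [gaussianPDFReal, NNReal.coe_one, mul_one, sub_zero]
  congr 1
  ring_nf

lemma gauss_int_sq : Integrable (fun x => x^2) (gaussianReal 0 1) := by
  rw [gauss_integrable_iff]
  have h := (integrable_rpow_mul_exp_neg_mul_sq (by norm_num : (0:ℝ) < 1/2)
    (by norm_num : (-1:ℝ) < 2)).const_mul (Real.sqrt (2 * π))⁻¹
  refine h.congr (Filter.Eventually.of_forall fun x => ?_)
  simp only [gauss_pdf_eq, show ((2:ℕ):ℝ) = (2:ℝ) by norm_num ▸ Real.rpow_natCast x 2]
  ring

lemma integral_Ioi_sq_exp : ∫ x in Set.Ioi (0:ℝ), x^2 * Real.exp (-(1/2) * x^2)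
    = Real.sqrt 2 * Real.sqrt π / 2 := by
  have h := integral_rpow_mul_exp_neg_mul_rpow (p := 2) (q := 2) (b := 1/2)
    (by norm_num) (by norm_num) (by norm_num)
  rw [show ∫ x in Set.Ioi (0:ℝ), x^2 * Real.exp (-(1/2) * x^2)
      = ∫ x in Set.Ioi (0:ℝ), x ^ (2:ℝ) * Real.exp (-(1/2) * x ^ (2:ℝ)) from
    setIntegral_congr_fun measurableSet_Ioi (fun x _ => by
      rw [show (2:ℝ) = ((2:ℕ):ℝ) by norm_num, Real.rpow_natCast]), h]
  have h32 : Real.Gamma ((2 + 1)/2) = Real.sqrt π / 2 := by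
    rw [show ((2:ℝ)+1)/2 = 1/2 + 1 by norm_num, Real.Gamma_add_one (by norm_num),
      Real.Gamma_one_half_eq]
    ring
  have hpow : ((1:ℝ)/2) ^ (-((2:ℝ) + 1) / 2) = 2 * Real.sqrt 2 := by
    rw [show ((1:ℝ)/2) = 2⁻¹ by norm_num,
      Real.inv_rpow (by norm_num), ← Real.rpow_neg (by norm_num),
      show (-(-((2:ℝ)+1)/2)) = 1 + 1/2 by norm_num,
      Real.rpow_add (by norm_num), Real.rpow_one, ← Real.sqrt_eq_rpow]
  rw [h32, hpow]
  ring

lemma gauss_val_sq : ∫ x, x^2 ∂(gaussianReal 0 1) = 1 := by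
  rw [gauss_integral_eq]
  simp_rw [gauss_pdf_eq, mul_assoc, integral_const_mul, mul_comm (Real.exp _)]
  have heven : (fun x : ℝ => x^2 * Real.exp (-(1/2) * x^2))
      = fun x : ℝ => |x|^2 * Real.exp (-(1/2) * |x|^2) := by
    ext x; rw [sq_abs]
  calc (Real.sqrt (2*π))⁻¹ * ∫ x : ℝ, x^2 * Real.exp (-(1/2) * x^2)
      = (Real.sqrt (2*π))⁻¹ * ∫ x : ℝ, |x|^2 * Real.exp (-(1/2) * |x|^2) := by rw [heven]
    _ = (Real.sqrt (2*π))⁻¹ * (2 * ∫ x in Set.Ioi (0:ℝ), x^2 * Real.exp (-(1/2) * x^2)) := by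
        rw [integral_comp_abs (f := fun x : ℝ => x^2 * Real.exp (-(1/2) * x^2))]
    _ = 1 := by
        rw [integral_Ioi_sq_exp, Real.sqrt_mul (by norm_num)]
        have h2 : Real.sqrt 2 ≠ 0 := by positivity
        have hp : Real.sqrt π ≠ 0 := by positivity
        field_simp

lemma gauss_val_id : ∫ x, x ∂(gaussianReal 0 1) = 0 := by
  have hmap : (gaussianReal 0 1).map (fun x => (-1:ℝ) * x) = gaussianReal 0 1 := by
    have h := gaussianReal_map_const_mul (μ := 0) (v := 1) (-1 : ℝ)
    have h1 : (⟨(-1:ℝ)^2, sq_nonneg _⟩ : ℝ≥0) * 1 = 1 := by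
      ext; norm_num
    rw [h]
    congr 1
    · norm_num
  have h1 : ∫ x, x ∂(gaussianReal 0 1) = ∫ x, (-1:ℝ) * x ∂(gaussianReal 0 1) := by
    conv_lhs => rw [← hmap]
    exact integral_map (φ := fun x : ℝ => (-1:ℝ) * x) (f := fun y : ℝ => y)
      (measurable_id.const_mul _).aemeasurable aestronglyMeasurable_id
  rw [integral_const_mul] at h1
  linarith
set_option linter.unusedSectionVars false


section OmegaLevel
variable {Ω : Type*} [MeasurableSpace Ω] (μ : Measure Ω) [IsProbabilityMeasure μ]

lemma std_memℒp2 {X : Ω → ℝ} (hm : Measurable X)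
    (hl : Measure.map X μ = gaussianReal 0 1) : MemLp X 2 μ := by
  have h : MemLp (id : ℝ → ℝ) 2 (gaussianReal 0 1) :=
    (memLp_two_iff_integrable_sq aestronglyMeasurable_id).2 gauss_int_sq
  rw [← hl] at h
  exact (memLp_map_measure_iff aestronglyMeasurable_id hm.aemeasurable).1 h

lemma std_mean {X : Ω → ℝ} (hm : Measurable X)
    (hl : Measure.map X μ = gaussianReal 0 1) : ∫ ω, X ω ∂μ = 0 := by
  calc ∫ ω, X ω ∂μ = ∫ y, y ∂(Measure.map X μ) :=
        (integral_map hm.aemeasurable aestronglyMeasurable_id).symm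
    _ = 0 := by rw [hl]; exact gauss_val_id

lemma std_sq {X : Ω → ℝ} (hm : Measurable X)
    (hl : Measure.map X μ = gaussianReal 0 1) : ∫ ω, X ω ^ 2 ∂μ = 1 := by
  calc ∫ ω, X ω ^ 2 ∂μ = ∫ y, y ^ 2 ∂(Measure.map X μ) :=
        (integral_map hm.aemeasurable
          (measurable_id.pow_const 2).aestronglyMeasurable).symm
    _ = 1 := by rw [hl]; exact gauss_val_sq

lemma L2_int_mul {X Y : Ω → ℝ} (hX : MemLp X 2 μ) (hY : MemLp Y 2 μ) :
    Integrable (fun ω => X ω * Y ω) μ := by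
  refine Integrable.mono' (hX.integrable_sq.add hY.integrable_sq) (hX.1.mul hY.1)
    (Filter.Eventually.of_forall fun ω => ?_)
  rw [Real.norm_eq_abs, abs_mul]
  simp only [Pi.add_apply]
  nlinarith [sq_nonneg (|X ω| - |Y ω|), sq_abs (X ω), sq_abs (Y ω), abs_nonneg (X ω),
    abs_nonneg (Y ω)]

variable {r N : ℕ} (G : Fin r × Fin N → Ω → ℝ)
  (hGmeas : ∀ p, Measurable (G p))
  (hGlaw : ∀ p, Measure.map (G p) μ = gaussianReal 0 1)
  (hGindep : iIndepFun G μ)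

include hGmeas hGlaw hGindep in
lemma comb_sq (k : Fin r) (a : Fin N → ℝ) :
    ∫ ω, (∑ i, G (k, i) ω * a i) ^ 2 ∂μ = ∑ i, (a i) ^ 2 := by
  have hL2 : ∀ p, MemLp (G p) 2 μ := fun p => std_memℒp2 μ (hGmeas p) (hGlaw p)
  have hmul_int : ∀ p q : Fin r × Fin N, Integrable (fun ω => G p ω * G q ω) μ :=
    fun p q => L2_int_mul μ (hL2 p) (hL2 q)
  have hEmul : ∀ i i' : Fin N, i ≠ i' → ∫ ω, G (k, i) ω * G (k, i') ω ∂μ = 0 := by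
    intro i i' h
    have hne : (k, i) ≠ (k, i') := by simp [h]
    have hind : IndepFun (G (k, i)) (G (k, i')) μ := hGindep.indepFun hne
    have hi := hind.integral_mul_eq_mul_integral (hL2 _).1 (hL2 _).1
    have hfe : (fun ω => G (k, i) ω * G (k, i') ω) = G (k, i) * G (k, i') := rfl
    rw [hfe, hi, std_mean μ (hGmeas _) (hGlaw _), zero_mul]
  have hpt : ∀ ω, (∑ i, G (k, i) ω * a i) ^ 2
      = ∑ i, ∑ i', (a i * a i') * (G (k, i) ω * G (k, i') ω) := by
    intro ω
    rw [sq, Finset.sum_mul_sum]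
    exact Finset.sum_congr rfl fun i _ => Finset.sum_congr rfl fun i' _ => by ring
  simp_rw [hpt]
  rw [integral_finset_sum _ (fun i _ => integrable_finset_sum _
    (fun i' _ => (hmul_int (k, i) (k, i')).const_mul _))]
  refine Finset.sum_congr rfl fun i _ => ?_
  rw [integral_finset_sum _ (fun i' _ => (hmul_int (k, i) (k, i')).const_mul _)]
  rw [Finset.sum_eq_single i]
  · rw [integral_const_mul]
    have : ∫ ω, G (k, i) ω * G (k, i) ω ∂μ = 1 := by
      simp_rw [← sq]
      exact std_sq μ (hGmeas _) (hGlaw _)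
    rw [this, mul_one, sq]
  · intro i' _ hne
    rw [integral_const_mul, hEmul i i' (Ne.symm hne), mul_zero]
  · intro h; exact absurd (Finset.mem_univ i) h

variable {d : ℕ} (x : Fin N → Fin d → ℝ)

include hGmeas hGlaw in
lemma Y_memℒp2 (k : Fin r) :
    MemLp (fun ω => Real.sqrt (∑ j, (∑ i, G (k, i) ω * x i j) ^ 2)) 2 μ := by
  have hL2 : ∀ p, MemLp (G p) 2 μ := fun p => std_memℒp2 μ (hGmeas p) (hGlaw p)
  have hmeas : Measurable (fun ω => Real.sqrt (∑ j, (∑ i, G (k, i) ω * x i j) ^ 2)) := by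
    apply Measurable.sqrt
    exact Finset.measurable_sum _ fun j _ =>
      (Finset.measurable_sum _ fun i _ => (hGmeas (k, i)).mul_const _).pow_const 2
  have hsum : ∀ j, MemLp (fun ω => ∑ i, G (k, i) ω * x i j) 2 μ := fun j => by
    have h := memLp_finset_sum (f := fun i ω => x i j * G (k, i) ω) Finset.univ
      (fun i _ => (hL2 (k, i)).const_mul (x i j))
    simpa [mul_comm] using h
  refine (memLp_two_iff_integrable_sq hmeas.aestronglyMeasurable).2 ?_
  have heq : ∀ ω, Real.sqrt (∑ j, (∑ i, G (k, i) ω * x i j) ^ 2) ^ 2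
      = ∑ j, (∑ i, G (k, i) ω * x i j) ^ 2 := fun ω =>
    Real.sq_sqrt (by positivity)
  simp_rw [heq]
  exact integrable_finset_sum _ fun j _ => (hsum j).integrable_sq

include hGmeas hGlaw hGindep in
lemma exp_norm_le (k : Fin r) :
    ∫ ω, Real.sqrt (∑ j, (∑ i, G (k, i) ω * x i j) ^ 2) ∂μ
      ≤ Real.sqrt (∑ i, ∑ j, (x i j) ^ 2) := by
  set Y := fun ω => Real.sqrt (∑ j, (∑ i, G (k, i) ω * x i j) ^ 2) with hY
  have hY2 : MemLp Y 2 μ := Y_memℒp2 μ G hGmeas hGlaw x k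
  have hvar := variance_nonneg Y μ
  rw [variance_eq_sub hY2] at hvar
  have hval : ∫ ω, Y ω ^ 2 ∂μ = ∑ i, ∑ j, (x i j) ^ 2 := by
    have heq : ∀ ω, Y ω ^ 2 = ∑ j, (∑ i, G (k, i) ω * x i j) ^ 2 := fun ω =>
      Real.sq_sqrt (by positivity)
    simp_rw [heq]
    have hL2 : ∀ p, MemLp (G p) 2 μ := fun p => std_memℒp2 μ (hGmeas p) (hGlaw p)
    have hsum : ∀ j, MemLp (fun ω => ∑ i, G (k, i) ω * x i j) 2 μ := fun j => by
      have h := memLp_finset_sum (f := fun i ω => x i j * G (k, i) ω) Finset.univ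
        (fun i _ => (hL2 (k, i)).const_mul (x i j))
      simpa [mul_comm] using h
    rw [integral_finset_sum (f := fun j ω => (∑ i, G (k, i) ω * x i j) ^ 2) _
      (fun j _ => (hsum j).integrable_sq)]
    rw [Finset.sum_comm]
    exact Finset.sum_congr rfl fun j _ => comb_sq μ G hGmeas hGlaw hGindep k _
  refine Real.le_sqrt_of_sq_le ?_
  have h1 : (∫ ω, Y ω ∂μ) ^ 2 ≤ ∫ ω, Y ω ^ 2 ∂μ := by
    have : μ[Y ^ 2] = ∫ ω, Y ω ^ 2 ∂μ := by
      congr 1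
    have h2 : μ[Y] = ∫ ω, Y ω ∂μ := rfl
    nlinarith [hvar]
  calc (∫ ω, Y ω ∂μ) ^ 2 ≤ ∫ ω, Y ω ^ 2 ∂μ := h1
    _ = ∑ i, ∑ j, (x i j) ^ 2 := hval

end OmegaLevel



open MeasureTheory ProbabilityTheory
open scoped ENNReal

/-- **Empirical Gaussian complexity bound for the orthonormal-column linear class.**
`Ĝ_X(H) ≤ (r/√N) · √((1/N) Σ_i ‖x_i‖²)`, where
`Ĝ_X(H) = (1/N) E[ sup_{BᵀB = I_r} Σ_k Σ_i g_{ki} ⟨b_k, x_i⟩ ]` with independent standard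
Gaussians `g_{ki}`, and `H` is the class of maps `h(x) = Bᵀx` with orthonormal columns. -/
theorem empirical_gaussian_complexity_orthonormal_class
    {Ω : Type*} [MeasurableSpace Ω] (μ : Measure Ω) [IsProbabilityMeasure μ]
    (d r N : ℕ) (hr : 1 ≤ r) (hrd : r ≤ d) (hN : 1 ≤ N)
    (G : Fin r × Fin N → Ω → ℝ)
    (hGmeas : ∀ p, Measurable (G p))
    (hGlaw : ∀ p, Measure.map (G p) μ = gaussianReal 0 1)
    (hGindep : iIndepFun G μ)
    (x : Fin N → Fin d → ℝ) :
    (N : ℝ)⁻¹ *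
        ∫ ω, (⨆ B : {B : Matrix (Fin d) (Fin r) ℝ // B.transpose * B = 1},
          ∑ k : Fin r, ∑ i : Fin N,
            G (k, i) ω * ∑ j : Fin d, (B : Matrix (Fin d) (Fin r) ℝ) j k * x i j) ∂μ ≤
      (r : ℝ) / Real.sqrt N *
        Real.sqrt ((N : ℝ)⁻¹ * ∑ i : Fin N, ∑ j : Fin d, (x i j) ^ 2) := by
  classical
  set S := ∑ i : Fin N, ∑ j : Fin d, (x i j) ^ 2 with hS
  have hNpos : (0:ℝ) < N := by exact_mod_cast hN
  have hRHS : (r:ℝ)/Real.sqrt N * Real.sqrt ((N:ℝ)⁻¹ * S)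
      = (N:ℝ)⁻¹ * ((r:ℝ) * Real.sqrt S) := by
    rw [Real.sqrt_mul (by positivity) S, Real.sqrt_inv]
    have hs : Real.sqrt N * Real.sqrt N = (N:ℝ) := Real.mul_self_sqrt hNpos.le
    have hinv : (Real.sqrt N)⁻¹ * (Real.sqrt N)⁻¹ = (N:ℝ)⁻¹ := by rw [← mul_inv, hs]
    calc (r:ℝ)/Real.sqrt N * ((Real.sqrt N)⁻¹ * Real.sqrt S)
        = ((Real.sqrt N)⁻¹ * (Real.sqrt N)⁻¹) * ((r:ℝ) * Real.sqrt S) := by ring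
      _ = (N:ℝ)⁻¹ * ((r:ℝ) * Real.sqrt S) := by rw [hinv]
  rw [hRHS]
  have hne : Nonempty {B : Matrix (Fin d) (Fin r) ℝ // B.transpose * B = 1} := by
    refine ⟨⟨Matrix.of fun j k' => if j = Fin.castLE hrd k' then 1 else 0, ?_⟩⟩
    ext k k'
    rw [Matrix.mul_apply]
    simp only [Matrix.transpose_apply, Matrix.of_apply]
    rw [Finset.sum_eq_single (Fin.castLE hrd k)]
    · simp [Matrix.one_apply, Fin.ext_iff]
    · intro b _ hb; simp [hb]
    · simp
  set W : Ω → ℝ := fun ω => ∑ k : Fin r,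
    Real.sqrt (∑ j : Fin d, (∑ i : Fin N, G (k, i) ω * x i j) ^ 2) with hW
  have hYint : ∀ k : Fin r, Integrable
      (fun ω => Real.sqrt (∑ j : Fin d, (∑ i : Fin N, G (k, i) ω * x i j) ^ 2)) μ :=
    fun k => (Y_memℒp2 μ G hGmeas hGlaw x k).integrable one_le_two
  have hWint : Integrable W μ := integrable_finset_sum _ fun k _ => hYint k
  have hpt : ∀ ω, (⨆ B : {B : Matrix (Fin d) (Fin r) ℝ // B.transpose * B = 1},
      ∑ k : Fin r, ∑ i : Fin N,
        G (k, i) ω * ∑ j : Fin d, (B : Matrix (Fin d) (Fin r) ℝ) j k * x i j) ≤ W ω := by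
    intro ω
    refine ciSup_le fun B => ?_
    have hrearr : ∀ k : Fin r, ∑ i, G (k, i) ω * ∑ j, (B : Matrix (Fin d) (Fin r) ℝ) j k * x i j
        = ∑ j, (B : Matrix (Fin d) (Fin r) ℝ) j k * ∑ i, G (k, i) ω * x i j := by
      intro k
      simp_rw [Finset.mul_sum]
      rw [Finset.sum_comm]
      exact Finset.sum_congr rfl fun j _ => Finset.sum_congr rfl fun i _ => by ring
    calc ∑ k : Fin r, ∑ i : Fin N,
          G (k, i) ω * ∑ j : Fin d, (B : Matrix (Fin d) (Fin r) ℝ) j k * x i j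
        = ∑ k : Fin r, ∑ j : Fin d,
            (B : Matrix (Fin d) (Fin r) ℝ) j k * ∑ i, G (k, i) ω * x i j :=
          Finset.sum_congr rfl fun k _ => hrearr k
      _ ≤ W ω := by
          refine Finset.sum_le_sum fun k _ => ?_
          refine Real.le_sqrt_of_sq_le ?_
          have hcs := Finset.sum_mul_sq_le_sq_mul_sq Finset.univ
            (fun j => (B : Matrix (Fin d) (Fin r) ℝ) j k)
            (fun j => ∑ i, G (k, i) ω * x i j)
          have hbk : ∑ j : Fin d, ((B : Matrix (Fin d) (Fin r) ℝ) j k) ^ 2 = 1 := by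
            have h1 := congrFun (congrFun B.2 k) k
            rw [Matrix.mul_apply] at h1
            simp only [Matrix.transpose_apply, Matrix.one_apply_eq] at h1
            simpa [sq] using h1
          calc (∑ j : Fin d, (B : Matrix (Fin d) (Fin r) ℝ) j k * ∑ i, G (k, i) ω * x i j) ^ 2
              ≤ (∑ j : Fin d, ((B : Matrix (Fin d) (Fin r) ℝ) j k) ^ 2) *
                ∑ j : Fin d, (∑ i, G (k, i) ω * x i j) ^ 2 := hcs
            _ = ∑ j : Fin d, (∑ i, G (k, i) ω * x i j) ^ 2 := by rw [hbk, one_mul]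
  by_cases hF : Integrable (fun ω => ⨆ B : {B : Matrix (Fin d) (Fin r) ℝ // B.transpose * B = 1},
      ∑ k : Fin r, ∑ i : Fin N,
        G (k, i) ω * ∑ j : Fin d, (B : Matrix (Fin d) (Fin r) ℝ) j k * x i j) μ
  · have h1 := integral_mono hF hWint hpt
    have h2 : ∫ ω, W ω ∂μ = ∑ k : Fin r,
        ∫ ω, Real.sqrt (∑ j : Fin d, (∑ i : Fin N, G (k, i) ω * x i j) ^ 2) ∂μ :=
      integral_finset_sum _ fun k _ => hYint k
    have h3 : ∑ k : Fin r,
        (∫ ω, Real.sqrt (∑ j : Fin d, (∑ i : Fin N, G (k, i) ω * x i j) ^ 2) ∂μ)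
        ≤ (r : ℝ) * Real.sqrt S := by
      calc ∑ k : Fin r,
          (∫ ω, Real.sqrt (∑ j : Fin d, (∑ i : Fin N, G (k, i) ω * x i j) ^ 2) ∂μ)
          ≤ ∑ _k : Fin r, Real.sqrt S :=
            Finset.sum_le_sum fun k _ => exp_norm_le μ G hGmeas hGlaw hGindep x k
        _ = (r : ℝ) * Real.sqrt S := by
            rw [Finset.sum_const, Finset.card_univ, Fintype.card_fin, nsmul_eq_mul]
    have hfinal : ∫ ω, (⨆ B : {B : Matrix (Fin d) (Fin r) ℝ // B.transpose * B = 1},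
        ∑ k : Fin r, ∑ i : Fin N,
          G (k, i) ω * ∑ j : Fin d, (B : Matrix (Fin d) (Fin r) ℝ) j k * x i j) ∂μ
        ≤ (r : ℝ) * Real.sqrt S := by
      refine le_trans h1 ?_
      rw [h2] at *
      exact h3
    exact mul_le_mul_of_nonneg_left hfinal (by positivity)
  · rw [integral_undef hF, mul_zero]
    positivity
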